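/- arXiv:1808.09109 — 3 statements merged into one kernel-verified Lean document; each statement's English description precedes it below -/
import Mathlib

section
/- Let 0 < δ < 1/2 and l > 0 with δ < √2 · l. Then the kernel K_{δ,l}(r) := g_δ(r)/r³ - (r² - 2l²)/(r² + l²)^{5/2} is strictly positive for all r > 0, where g_δ(r) = 1 if r > δ and 0 otherwise. -/
/-! Beyond `δ` the kernel is `1/r³` minus a term whose numerator is below `r²` and whose
denominator exceeds `r⁵`; up to `δ` only the second term is left, and `r ≤ δ < √2 l` makes its
numerator `r² - 2l²` negative. -/

open Real

lemma pow_five_lt_rpow_five_halves {r a : ℝ} (hr : 0 ≤ r) (ha : 0 < a) :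
    r ^ 5 < (r ^ 2 + a) ^ ((5 : ℝ) / 2) :=
  calc r ^ 5 = (r ^ 2) ^ ((5 : ℝ) / 2) := by
        rw [← rpow_natCast r 2, ← rpow_mul hr]
        norm_num
    _ < (r ^ 2 + a) ^ ((5 : ℝ) / 2) := by
        apply rpow_lt_rpow (by positivity) (by linarith) (by norm_num)

lemma sub_div_rpow_five_halves_lt_one_div_pow_three {r l : ℝ} (hr : 0 < r) (hl : l ≠ 0) :
    (r ^ 2 - 2 * l ^ 2) / (r ^ 2 + l ^ 2) ^ ((5 : ℝ) / 2) < 1 / r ^ 3 := by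
  have hl2 : 0 < l ^ 2 := by positivity
  rw [div_lt_div_iff₀ (by positivity) (by positivity)]
  calc (r ^ 2 - 2 * l ^ 2) * r ^ 3 < r ^ 2 * r ^ 3 := by gcongr; linarith
    _ = r ^ 5 := by ring
    _ < (r ^ 2 + l ^ 2) ^ ((5 : ℝ) / 2) := pow_five_lt_rpow_five_halves hr.le hl2
    _ = 1 * (r ^ 2 + l ^ 2) ^ ((5 : ℝ) / 2) := (one_mul _).symm

lemma sq_lt_two_mul_sq_of_lt_sqrt_two_mul {r l : ℝ} (hr : 0 ≤ r) (h : r < √2 * l) :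
    r ^ 2 < 2 * l ^ 2 := by
  calc r ^ 2 < (√2 * l) ^ 2 := pow_lt_pow_left₀ h hr two_ne_zero
    _ = 2 * l ^ 2 := by rw [mul_pow, sq_sqrt zero_le_two]

theorem stmt2_general (δ l : ℝ) (hl : 0 < l)
    (hδl : δ < Real.sqrt 2 * l) :
    ∀ r : ℝ, 0 < r →
      0 < (if δ < r then (1 : ℝ) else 0) / r ^ 3
            - (r ^ 2 - 2 * l ^ 2) / (r ^ 2 + l ^ 2) ^ ((5 : ℝ) / 2) := by
  intro r hr
  split_ifs with hδr
  · exact sub_pos.mpr (sub_div_rpow_five_halves_lt_one_div_pow_three hr hl.ne')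
  · have hr2 : r ^ 2 < 2 * l ^ 2 :=
      sq_lt_two_mul_sq_of_lt_sqrt_two_mul hr.le ((not_lt.mp hδr).trans_lt hδl)
    rw [zero_div, zero_sub, neg_pos]
    exact div_neg_of_neg_of_pos (by linarith) (by positivity)

/-- Positivity of the modified kernel `K_{δ,l}` when `δ < √2 · l`. -/
theorem stmt2 (δ l : ℝ) (hδ0 : 0 < δ) (hδ : δ < 1 / 2) (hl : 0 < l)
    (hδl : δ < Real.sqrt 2 * l) :
    ∀ r : ℝ, 0 < r →
      0 < (if δ < r then (1 : ℝ) else 0) / r ^ 3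
            - (r ^ 2 - 2 * l ^ 2) / (r ^ 2 + l ^ 2) ^ ((5 : ℝ) / 2) :=
  stmt2_general δ l hl hδl
end

section
/- Define h₂ : [0,1) → ℝ by h₂(t) = t − (4 − t − 2t²)E(t) + (4 − 3t − t²)K(t), where K(t) = ∫_0^{π/2} (1 − t sin²θ)^{−1/2} dθ and E(t) = ∫_0^{π/2} (1 − t sin²θ)^{1/2} dθ are complete elliptic integrals (with parameter t = k²). Then h₂(t) > 0 for all 0 < t < √(8/(3π)). -/
/-!
Comparing the integrands pointwise with their first-order Taylor polynomials in `x = t sin² θ`,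
`√(1 - x) ≤ 1 - x/2` and `1 + x/2 ≤ 1/√(1 - x)`, gives `E(t) ≤ (π/2)(1 - t/4)` and
`K(t) ≥ (π/2)(1 + t/4)`. Substituting into `h₂`, whose coefficients of `E` and `K` have the right
signs, the constant, linear and quadratic terms cancel and `h₂(t) ≥ t - (3π/8) t³`, which is
positive for `t² < 8/(3π)`.
-/

open Real intervalIntegral

noncomputable section

/-- Complete elliptic integral of the first kind (parameter `t = k²`). -/
def Kell (t : ℝ) : ℝ := ∫ θ in (0 : ℝ)..(π / 2), 1 / Real.sqrt (1 - t * Real.sin θ ^ 2)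

/-- Complete elliptic integral of the second kind (parameter `t = k²`). -/
def Eell (t : ℝ) : ℝ := ∫ θ in (0 : ℝ)..(π / 2), Real.sqrt (1 - t * Real.sin θ ^ 2)

end

noncomputable def h₂ (t : ℝ) : ℝ := t - (4 - t - 2 * t ^ 2) * Eell t + (4 - 3 * t - t ^ 2) * Kell t

lemma sqrt_one_sub_le_one_sub_half {x : ℝ} (hx : x ≤ 2) : √(1 - x) ≤ 1 - x / 2 :=
  Real.sqrt_le_iff.mpr ⟨by linarith, by nlinarith [sq_nonneg x]⟩

lemma one_add_half_le_one_div_sqrt_one_sub {x : ℝ} (hx : x < 1) : 1 + x / 2 ≤ 1 / √(1 - x) := by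
  set s := √(1 - x)
  have hs : 0 < s := Real.sqrt_pos.mpr (by linarith)
  have hs_sq : s ^ 2 = 1 - x := Real.sq_sqrt (by linarith)
  rw [le_div_iff₀ hs]
  -- with `x = 1 - s²` this is `s³ - 3s + 2 = (s - 1)² (s + 2) ≥ 0`
  nlinarith [mul_nonneg (sq_nonneg (s - 1)) (by linarith : (0 : ℝ) ≤ s + 2)]

lemma integral_add_mul_sin_sq (a b : ℝ) :
    ∫ θ in (0 : ℝ)..(π / 2), (a + b * sin θ ^ 2) = π / 2 * (a + b / 2) := by
  rw [integral_add intervalIntegrable_const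
      ((by fun_prop : Continuous fun θ => b * sin θ ^ 2).intervalIntegrable _ _),
    integral_const_mul, integral_sin_sq]
  simp only [sin_pi_div_two, cos_pi_div_two, sin_zero, cos_zero, integral_const, sub_zero, smul_eq_mul]
  ring

lemma Eell_le {t : ℝ} (ht : t ≤ 2) : Eell t ≤ π / 2 * (1 - t / 4) := by
  have hmono : Eell t ≤ ∫ θ in (0 : ℝ)..(π / 2), (1 + (-t / 2) * sin θ ^ 2) := by
    refine integral_mono_on (by positivity) ?_ ?_ fun θ _ => ?_
    · exact (Real.continuous_sqrt.comp (by fun_prop)).intervalIntegrable _ _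
    · exact (by fun_prop : Continuous fun θ => 1 + (-t / 2) * sin θ ^ 2).intervalIntegrable _ _
    · have h := sqrt_one_sub_le_one_sub_half (x := t * sin θ ^ 2)
        (by nlinarith [sin_sq_le_one θ, sq_nonneg (sin θ)])
      linarith
  rw [integral_add_mul_sin_sq] at hmono
  linarith

lemma le_Kell {t : ℝ} (ht : t < 1) : π / 2 * (1 + t / 4) ≤ Kell t := by
  have hx (θ : ℝ) : t * sin θ ^ 2 < 1 := by
    rcases le_or_gt 0 t with h | h
    · nlinarith [sin_sq_le_one θ]
    · nlinarith [sq_nonneg (sin θ)]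
  have hmono : ∫ θ in (0 : ℝ)..(π / 2), (1 + (t / 2) * sin θ ^ 2) ≤ Kell t := by
    refine integral_mono_on (by positivity) ?_ ?_ fun θ _ => ?_
    · exact (by fun_prop : Continuous fun θ => 1 + (t / 2) * sin θ ^ 2).intervalIntegrable _ _
    · refine (continuous_const.div (Real.continuous_sqrt.comp (by fun_prop)) fun θ => ?_).intervalIntegrable _ _
      exact (Real.sqrt_pos.mpr (by linarith [hx θ])).ne'
    · have h := one_add_half_le_one_div_sqrt_one_sub (hx θ)
      linarith
  rw [integral_add_mul_sin_sq] at hmono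
  linarith

lemma sub_mul_cube_le_h₂ {t : ℝ} (ht₀ : -1 ≤ t) (ht₁ : t < 1) : t - 3 * π / 8 * t ^ 3 ≤ h₂ t := by
  have hE := mul_le_mul_of_nonneg_left (Eell_le (t := t) (by linarith))
    (by nlinarith : (0 : ℝ) ≤ 4 - t - 2 * t ^ 2)
  have hK := mul_le_mul_of_nonneg_left (le_Kell ht₁) (by nlinarith : (0 : ℝ) ≤ 4 - 3 * t - t ^ 2)
  unfold h₂
  nlinarith

/-- Positivity of `h₂(t) = t − (4−t−2t²)E(t) + (4−3t−t²)K(t)`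
on `(0, √(8/(3π)))`. -/
theorem stmt12 :
    ∀ t : ℝ, 0 < t → t < Real.sqrt (8 / (3 * π)) →
      0 < t - (4 - t - 2 * t ^ 2) * Eell t + (4 - 3 * t - t ^ 2) * Kell t := by
  intro t ht₀ ht
  have ht_sq : t ^ 2 * (3 * π) < 8 := (lt_div_iff₀ (by positivity)).mp ((lt_sqrt ht₀.le).mp ht)
  have ht₁ : t < 1 := by nlinarith [pi_gt_three]
  have hcube : 3 * π / 8 * t ^ 3 < t := by nlinarith
  calc 0 < t - 3 * π / 8 * t ^ 3 := by linarith
    _ ≤ h₂ t := sub_mul_cube_le_h₂ (by linarith) ht₁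
end

section
/- For every a > 0 and l > 0, lim_{m→∞} (1/m) ∫_{−am/2}^{am/2} ∫_{−am/2}^{am/2} ( 1/√((s−t)² + l²) − 1/√((s−t)² + 1/a² + l²) ) ds dt = a ∫_{−∞}^{∞} ( 1/√(s² + l²) − 1/√(s² + 1/a² + l²) ) ds = −2a log l + a log(1/a² + l²). -/
/-!
The kernel `k(x) = 1/√(x² + c₁²) - 1/√(x² + c₂²)` has the primitive `arsinh (x/c₁) - arsinh (x/c₂)`
and the even second primitive `K = G c₁ - G c₂`, where `G c x = x arsinh (x/c) - √(x² + c²)`.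
Hence the integral of `k (s - t)` over the square `[-L/2, L/2]²` is `2 (K L - K 0)`.
Since `arsinh (x/c) = log (2x/c) + o(1)` as `x → ∞`, both the first primitive and `K L / L` tend
to `log c₂ - log c₁`: this gives `∫ k = 2 (log c₂ - log c₁)` (the kernel has constant sign, so a
bounded primitive makes it integrable) and the same limit for the square averages `L⁻¹ ∫∫ k (s - t)`.
The theorem is the case `c₁ = l`, `c₂² = 1/a² + l²`, `L = a m`.
-/

open Real Filter intervalIntegral MeasureTheory

open Topology

theorem integrable_of_hasDerivAt_of_nonneg_of_tendsto {g g' : ℝ → ℝ} {m n : ℝ}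
    (hderiv : ∀ x, HasDerivAt g (g' x) x) (hnonneg : ∀ x, 0 ≤ g' x)
    (hbot : Tendsto g atBot (𝓝 m)) (htop : Tendsto g atTop (𝓝 n)) : Integrable g' := by
  have hint : ∀ a b, IntervalIntegrable g' volume a b := fun a b =>
    intervalIntegrable_deriv_of_nonneg (fun x _ => (hderiv x).continuousAt.continuousWithinAt)
      (fun x _ => hderiv x) (fun x _ => hnonneg x)
  refine integrable_of_intervalIntegral_norm_tendsto (n - m) (fun i => (hint (-i) i).1)
    tendsto_neg_atTop_atBot tendsto_id ((htop.sub (hbot.comp tendsto_neg_atTop_atBot)).congr ?_)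
  intro i
  simp only [Function.comp_apply, norm_of_nonneg (hnonneg _)]
  rw [integral_eq_sub_of_hasDerivAt (fun x _ => hderiv x) (hint _ _)]

theorem integral_integral_comp_sub_of_hasDerivAt {k K' K : ℝ → ℝ}
    (hK : ∀ x, HasDerivAt K (K' x) x) (hK' : ∀ x, HasDerivAt K' (k x) x) (hk : Continuous k)
    (a b : ℝ) :
    ∫ s in a..b, ∫ t in a..b, k (s - t) = K (b - a) + K (a - b) - 2 * K 0 := by
  have hK'cont : Continuous K' := continuous_iff_continuousAt.2 fun x => (hK' x).continuousAt
  have inner : ∀ s, ∫ t in a..b, k (s - t) = K' (s - a) - K' (s - b) := fun s => by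
    rw [integral_comp_sub_left,
      integral_eq_sub_of_hasDerivAt (fun x _ => hK' x) (hk.intervalIntegrable _ _)]
  have hint : ∀ d, IntervalIntegrable (fun s => K' (s - d)) volume a b := fun d =>
    (hK'cont.comp (continuous_sub_right d)).intervalIntegrable a b
  simp only [inner]
  rw [integral_sub (hint a) (hint b),
    integral_comp_sub_right, integral_comp_sub_right,
    integral_eq_sub_of_hasDerivAt (fun x _ => hK x) (hK'cont.intervalIntegrable _ _),
    integral_eq_sub_of_hasDerivAt (fun x _ => hK x) (hK'cont.intervalIntegrable _ _)]
  simp only [sub_self]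
  ring

noncomputable def invSqrtDiff (c₁ c₂ x : ℝ) : ℝ := 1 / √(x ^ 2 + c₁ ^ 2) - 1 / √(x ^ 2 + c₂ ^ 2)

noncomputable def arsinhPrimitive (c x : ℝ) : ℝ := x * arsinh (x / c) - √(x ^ 2 + c ^ 2)

section

variable {c c₁ c₂ x : ℝ}

lemma sqrt_one_add_div_sq (hc : 0 < c) (x : ℝ) : √(1 + (x / c) ^ 2) = √(x ^ 2 + c ^ 2) / c := by
  rw [show 1 + (x / c) ^ 2 = (x ^ 2 + c ^ 2) / c ^ 2 by field_simp; ring,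
    sqrt_div' _ (sq_nonneg c), sqrt_sq hc.le]

lemma hasDerivAt_arsinh_div (hc : 0 < c) (x : ℝ) :
    HasDerivAt (fun y => arsinh (y / c)) (1 / √(x ^ 2 + c ^ 2)) x := by
  refine ((hasDerivAt_arsinh (x / c)).comp x ((hasDerivAt_id x).div_const c)).congr_deriv ?_
  rw [sqrt_one_add_div_sq hc]
  field_simp

lemma hasDerivAt_arsinhPrimitive (hc : 0 < c) (x : ℝ) :
    HasDerivAt (arsinhPrimitive c) (arsinh (x / c)) x := by
  have hsqrt : HasDerivAt (fun y => √(y ^ 2 + c ^ 2)) (x / √(x ^ 2 + c ^ 2)) x := by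
    refine (((hasDerivAt_pow 2 x).add_const (c ^ 2)).sqrt (by positivity)).congr_deriv ?_
    norm_num
    field_simp
  refine (((hasDerivAt_id x).mul (hasDerivAt_arsinh_div hc x)).sub hsqrt).congr_deriv ?_
  simp only [id]
  field_simp
  ring

lemma arsinhPrimitive_neg (c x : ℝ) : arsinhPrimitive c (-x) = arsinhPrimitive c x := by
  simp [arsinhPrimitive, neg_div]

lemma sqrt_sq_add_sq_div (hx : 0 < x) : √(x ^ 2 + c ^ 2) / x = √(1 + (c * x⁻¹) ^ 2) := by
  rw [show 1 + (c * x⁻¹) ^ 2 = (x ^ 2 + c ^ 2) / x ^ 2 by field_simp,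
    sqrt_div' _ (sq_nonneg x), sqrt_sq hx.le]

lemma arsinh_div_sub_log (hc : 0 < c) (hx : 0 < x) :
    arsinh (x / c) - log x = log (1 + √(1 + (c * x⁻¹) ^ 2)) - log c := by
  have hsqrt : √(1 + (x / c) ^ 2) = x / c * √(1 + (c * x⁻¹) ^ 2) := by
    rw [show 1 + (x / c) ^ 2 = (x / c) ^ 2 * (1 + (c * x⁻¹) ^ 2) by field_simp; ring,
      sqrt_mul (sq_nonneg _), sqrt_sq (div_pos hx hc).le]
  rw [arsinh, hsqrt, show x / c + x / c * √(1 + (c * x⁻¹) ^ 2)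
      = x * (1 + √(1 + (c * x⁻¹) ^ 2)) / c by ring,
    log_div (by positivity) hc.ne', log_mul hx.ne' (by positivity)]
  ring

lemma tendsto_arsinh_div_sub_log (hc : 0 < c) :
    Tendsto (fun x => arsinh (x / c) - log x) atTop (𝓝 (log 2 - log c)) := by
  have hcont : ContinuousAt (fun y => log (1 + √(1 + (c * y) ^ 2)) - log c) 0 :=
    ((ContinuousAt.log (by fun_prop) (by positivity)).sub continuousAt_const)
  have h := hcont.tendsto.comp tendsto_inv_atTop_zero
  norm_num at h
  refine h.congr' ?_
  filter_upwards [eventually_gt_atTop 0] with x hx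
  exact (arsinh_div_sub_log hc hx).symm

lemma tendsto_arsinh_div_sub_arsinh_div (h₁ : 0 < c₁) (h₂ : 0 < c₂) :
    Tendsto (fun x => arsinh (x / c₁) - arsinh (x / c₂)) atTop (𝓝 (log c₂ - log c₁)) := by
  rw [show log c₂ - log c₁ = (log 2 - log c₁) - (log 2 - log c₂) by ring]
  exact ((tendsto_arsinh_div_sub_log h₁).sub (tendsto_arsinh_div_sub_log h₂)).congr
    fun x => by ring

lemma tendsto_arsinh_div_sub_arsinh_div_atBot (h₁ : 0 < c₁) (h₂ : 0 < c₂) :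
    Tendsto (fun x => arsinh (x / c₁) - arsinh (x / c₂)) atBot (𝓝 (log c₁ - log c₂)) := by
  rw [← neg_sub]
  refine ((tendsto_arsinh_div_sub_arsinh_div h₁ h₂).neg.comp tendsto_neg_atBot_atTop).congr
    fun x => ?_
  simp only [Function.comp_apply, neg_div, arsinh_neg]
  ring

lemma tendsto_arsinhPrimitive_div_sub_log (hc : 0 < c) :
    Tendsto (fun x => arsinhPrimitive c x / x - log x) atTop (𝓝 (log 2 - log c - 1)) := by
  have hsqrt : Tendsto (fun x => √(1 + (c * x⁻¹) ^ 2)) atTop (𝓝 1) := by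
    have hcont : Continuous (fun y => √(1 + (c * y) ^ 2)) := by fun_prop
    simpa [Function.comp_def] using (hcont.tendsto 0).comp tendsto_inv_atTop_zero
  refine ((tendsto_arsinh_div_sub_log hc).sub hsqrt).congr' ?_
  filter_upwards [eventually_gt_atTop 0] with x hx
  rw [arsinhPrimitive, sub_div, mul_div_cancel_left₀ _ hx.ne', sqrt_sq_add_sq_div hx]
  ring

lemma tendsto_arsinhPrimitive_sub_div (h₁ : 0 < c₁) (h₂ : 0 < c₂) :
    Tendsto (fun x => (arsinhPrimitive c₁ x - arsinhPrimitive c₂ x) / x) atTop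
      (𝓝 (log c₂ - log c₁)) := by
  rw [show log c₂ - log c₁ = (log 2 - log c₁ - 1) - (log 2 - log c₂ - 1) by ring]
  refine ((tendsto_arsinhPrimitive_div_sub_log h₁).sub
    (tendsto_arsinhPrimitive_div_sub_log h₂)).congr fun x => ?_
  ring

lemma hasDerivAt_arsinh_div_sub_arsinh_div (h₁ : 0 < c₁) (h₂ : 0 < c₂) (x : ℝ) :
    HasDerivAt (fun y => arsinh (y / c₁) - arsinh (y / c₂)) (invSqrtDiff c₁ c₂ x) x :=
  (hasDerivAt_arsinh_div h₁ x).sub (hasDerivAt_arsinh_div h₂ x)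

lemma invSqrtDiff_nonneg (h₁ : 0 < c₁) (h₁₂ : c₁ ≤ c₂) (x : ℝ) : 0 ≤ invSqrtDiff c₁ c₂ x :=
  sub_nonneg.2 <| one_div_le_one_div_of_le (sqrt_pos.2 (by positivity))
    (sqrt_le_sqrt (by gcongr))

lemma invSqrtDiff_swap (c₁ c₂ : ℝ) : invSqrtDiff c₂ c₁ = -invSqrtDiff c₁ c₂ :=
  funext fun _ => (neg_sub _ _).symm

lemma integrable_invSqrtDiff (h₁ : 0 < c₁) (h₂ : 0 < c₂) : Integrable (invSqrtDiff c₁ c₂) := by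
  wlog h₁₂ : c₁ ≤ c₂ generalizing c₁ c₂
  · rw [← neg_neg (invSqrtDiff c₁ c₂), ← invSqrtDiff_swap]
    exact (this h₂ h₁ (le_of_not_ge h₁₂)).neg
  exact integrable_of_hasDerivAt_of_nonneg_of_tendsto
    (hasDerivAt_arsinh_div_sub_arsinh_div h₁ h₂) (invSqrtDiff_nonneg h₁ h₁₂)
    (tendsto_arsinh_div_sub_arsinh_div_atBot h₁ h₂) (tendsto_arsinh_div_sub_arsinh_div h₁ h₂)

lemma integral_invSqrtDiff (h₁ : 0 < c₁) (h₂ : 0 < c₂) :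
    ∫ x, invSqrtDiff c₁ c₂ x = 2 * (log c₂ - log c₁) := by
  rw [integral_of_hasDerivAt_of_tendsto (hasDerivAt_arsinh_div_sub_arsinh_div h₁ h₂)
    (integrable_invSqrtDiff h₁ h₂) (tendsto_arsinh_div_sub_arsinh_div_atBot h₁ h₂)
    (tendsto_arsinh_div_sub_arsinh_div h₁ h₂)]
  ring

lemma continuous_invSqrtDiff (h₁ : 0 < c₁) (h₂ : 0 < c₂) : Continuous (invSqrtDiff c₁ c₂) := by
  have h : ∀ c, 0 < c → Continuous fun x : ℝ => 1 / √(x ^ 2 + c ^ 2) := fun c hc =>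
    continuous_const.div (by fun_prop) fun x => (sqrt_pos.2 (by positivity)).ne'
  exact (h c₁ h₁).sub (h c₂ h₂)

lemma tendsto_integral_integral_invSqrtDiff (h₁ : 0 < c₁) (h₂ : 0 < c₂) :
    Tendsto (fun L => L⁻¹ * ∫ s in (-L / 2)..(L / 2), ∫ t in (-L / 2)..(L / 2),
      invSqrtDiff c₁ c₂ (s - t)) atTop (𝓝 (∫ x, invSqrtDiff c₁ c₂ x)) := by
  set K := fun x => arsinhPrimitive c₁ x - arsinhPrimitive c₂ x
  have hK : ∀ x, HasDerivAt K (arsinh (x / c₁) - arsinh (x / c₂)) x := fun x =>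
    (hasDerivAt_arsinhPrimitive h₁ x).sub (hasDerivAt_arsinhPrimitive h₂ x)
  have hdouble : ∀ L, ∫ s in (-L / 2)..(L / 2), ∫ t in (-L / 2)..(L / 2),
      invSqrtDiff c₁ c₂ (s - t) = 2 * K L - 2 * K 0 := fun L => by
    rw [integral_integral_comp_sub_of_hasDerivAt hK (hasDerivAt_arsinh_div_sub_arsinh_div h₁ h₂)
      (continuous_invSqrtDiff h₁ h₂)]
    simp only [K, show L / 2 - -L / 2 = L by ring, show -L / 2 - L / 2 = -L by ring,
      arsinhPrimitive_neg]
    ring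
  rw [integral_invSqrtDiff h₁ h₂,
    show 2 * (log c₂ - log c₁) = 2 * (log c₂ - log c₁) - 2 * K 0 * 0 by ring]
  refine (((tendsto_arsinhPrimitive_sub_div h₁ h₂).const_mul 2).sub
    (tendsto_inv_atTop_zero.const_mul (2 * K 0))).congr' ?_
  filter_upwards [eventually_gt_atTop 0] with L hL
  rw [hdouble]
  simp only [K]
  field_simp

end

/-- Limit of the modified stripe interaction per unit mass. -/
theorem stmt14 (a l : ℝ) (ha : 0 < a) (hl : 0 < l) :
    (a * ∫ s : ℝ, (1 / Real.sqrt (s ^ 2 + l ^ 2)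
          - 1 / Real.sqrt (s ^ 2 + 1 / a ^ 2 + l ^ 2))
        = -2 * a * Real.log l + a * Real.log (1 / a ^ 2 + l ^ 2)) ∧
    Tendsto
      (fun m : ℝ => (1 / m) *
        ∫ s in (-(a * m) / 2)..(a * m / 2), ∫ t in (-(a * m) / 2)..(a * m / 2),
          (1 / Real.sqrt ((s - t) ^ 2 + l ^ 2)
            - 1 / Real.sqrt ((s - t) ^ 2 + 1 / a ^ 2 + l ^ 2)))
      atTop
      (nhds (-2 * a * Real.log l + a * Real.log (1 / a ^ 2 + l ^ 2))) := by
  set c := √(1 / a ^ 2 + l ^ 2)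
  have hc : 0 < c := sqrt_pos.2 (by positivity)
  have hc_sq : c ^ 2 = 1 / a ^ 2 + l ^ 2 := sq_sqrt (by positivity)
  have hkernel : ∀ x, 1 / √(x ^ 2 + l ^ 2) - 1 / √(x ^ 2 + 1 / a ^ 2 + l ^ 2)
      = invSqrtDiff l c x := fun x => by
    rw [invSqrtDiff, hc_sq, add_assoc]
  have hvalue : -2 * a * log l + a * log (1 / a ^ 2 + l ^ 2) = a * ∫ x, invSqrtDiff l c x := by
    rw [integral_invSqrtDiff hl hc, ← hc_sq, log_pow]
    push_cast
    ring
  rw [hvalue]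
  simp only [hkernel, true_and]
  refine (((tendsto_integral_integral_invSqrtDiff hl hc).comp
    (tendsto_id.const_mul_atTop ha)).const_mul a).congr' ?_
  filter_upwards [eventually_ne_atTop 0] with m hm
  simp only [Function.comp_apply, id]
  field_simp
end
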